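/- The Euler derivation E = Σ_{k,ℓ} x_{k,ℓ} ∂/∂x_{k,ℓ} on Q satisfies E = n·Σ_{k=1}^{n+1} (−1)^{k+1} L_{k,k} + (n+1)·Σ_{ℓ=2}^{n} B_ℓ, where L_{k,k} = (−1)^{k+1}( Σ_{u≠k} x_{1,u} ∂/∂x_{1,u} − Σ_{v≠1} x_{v,k} ∂/∂x_{v,k} ) and B_ℓ = Σ_{s=1}^{n+1}( x_{ℓ,s} ∂/∂x_{ℓ,s} − x_{1,s} ∂/∂x_{1,s} ). -/
import Mathlib


open MvPolynomial Matrix Finset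

noncomputable section

/-- The generic `n × (n+1)` matrix of indeterminates. -/
def genX (k : Type) [Field k] (n : ℕ) :
    Matrix (Fin n) (Fin (n + 1)) (MvPolynomial (Fin n × Fin (n + 1)) k) :=
  Matrix.of fun i j => MvPolynomial.X (i, j)

/-- `Fm k n r` is the maximal minor of the generic matrix obtained by deleting column `r`. -/
def Fm (k : Type) [Field k] (n : ℕ) (r : Fin (n + 1)) :
    MvPolynomial (Fin n × Fin (n + 1)) k :=
  Matrix.det (Matrix.of fun i j : Fin n => genX k n i (r.succAbove j))

lemma key18 {R : Type*} [CommRing R] (n : ℕ) (z : Fin n) (hz : (z : ℕ) = 0)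
    (f : Fin n × Fin (n + 1) → R) :
    (∑ p : Fin n × Fin (n + 1), f p) =
      (n : R) * (∑ kc : Fin (n + 1),
          ((∑ u ∈ Finset.univ.erase kc, f (z, u)) -
            ∑ v ∈ Finset.univ.filter (fun v : Fin n => (v : ℕ) ≠ 0), f (v, kc))) +
        ((n : R) + 1) *
          ∑ l ∈ Finset.univ.filter (fun l : Fin n => (l : ℕ) ≠ 0),
            ∑ s : Fin (n + 1), (f (l, s) - f (z, s)) := by
  classical
  have hn : 1 ≤ n := Fin.pos z
  have hfil : (Finset.univ.filter (fun v : Fin n => (v : ℕ) ≠ 0)) = Finset.univ.erase z := by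
    ext v
    simp [Finset.mem_erase, Fin.ext_iff, hz]
  rw [hfil]
  have hcard : (Finset.univ.erase z).card = n - 1 := by
    rw [Finset.card_erase_of_mem (Finset.mem_univ z), Finset.card_univ, Fintype.card_fin]
  rw [Fintype.sum_prod_type, ← Finset.add_sum_erase Finset.univ _ (Finset.mem_univ z)]
  simp only [Finset.sum_erase_eq_sub (Finset.mem_univ _), Finset.sum_sub_distrib,
    Finset.sum_const, Finset.card_univ, Fintype.card_fin, hcard]
  rw [Finset.sum_comm]
  set S := ∑ u : Fin (n + 1), f (z, u)
  set T := ∑ v ∈ Finset.univ.erase z, ∑ c : Fin (n + 1), f (v, c)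
  simp only [nsmul_eq_mul, Nat.cast_sub hn, Nat.cast_add, Nat.cast_one]
  ring

theorem stmt18 (k : Type) [Field k] (n : ℕ) (hn : 2 ≤ n)
    (g : MvPolynomial (Fin n × Fin (n + 1)) k) :
    -- the Euler derivation applied to `g` ...
    (∑ p : Fin n × Fin (n + 1), genX k n p.1 p.2 * MvPolynomial.pderiv p g) =
      -- ... equals `n · Σ_k (−1)^{k+1} L_{k,k}(g)`
      (n : MvPolynomial (Fin n × Fin (n + 1)) k) *
          (∑ kc : Fin (n + 1),
            (-1 : MvPolynomial (Fin n × Fin (n + 1)) k) ^ ((kc : ℕ) + 1) *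
              ((-1 : MvPolynomial (Fin n × Fin (n + 1)) k) ^ ((kc : ℕ) + 1) *
                ((∑ u ∈ Finset.univ.erase kc,
                    genX k n ⟨0, by omega⟩ u *
                      MvPolynomial.pderiv ((⟨0, by omega⟩ : Fin n), u) g) -
                  ∑ v ∈ Finset.univ.filter (fun v : Fin n => (v : ℕ) ≠ 0),
                    genX k n v kc * MvPolynomial.pderiv (v, kc) g))) +
        -- ... plus `(n+1) · Σ_{ℓ=2}^{n} B_ℓ(g)`
        ((n : MvPolynomial (Fin n × Fin (n + 1)) k) + 1) *
          ∑ l ∈ Finset.univ.filter (fun l : Fin n => (l : ℕ) ≠ 0),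
            ∑ s : Fin (n + 1),
              (genX k n l s * MvPolynomial.pderiv (l, s) g -
                genX k n ⟨0, by omega⟩ s *
                  MvPolynomial.pderiv ((⟨0, by omega⟩ : Fin n), s) g) := by
  have hsign : ∀ (m : ℕ) (y : MvPolynomial (Fin n × Fin (n + 1)) k),
      (-1 : MvPolynomial (Fin n × Fin (n + 1)) k) ^ (m + 1) * ((-1) ^ (m + 1) * y) = y := by
    intro m y
    rw [← mul_assoc, ← pow_add, Even.neg_one_pow ⟨m + 1, by ring⟩, one_mul]
  simp only [hsign]
  exact key18 n (⟨0, by omega⟩ : Fin n) rfl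
    (fun p => genX k n p.1 p.2 * MvPolynomial.pderiv p g)
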